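/- arXiv:1006.3531 — 5 statements merged into one kernel-verified Lean document; each statement's English description precedes it below -/
import Mathlib

section
/- For any two complex numbers z and w, |e^z − e^w| ≤ (1/2)(|e^z| + |e^w|)·|z − w|. -/
/-!
Along the segment `t ↦ w + t (z - w)` the derivative of `exp` has norm `‖exp‖ ‖z - w‖`, and
`‖exp ζ‖ = e^{Re ζ}` is a convex function of `ζ`, so it is bounded by the affine interpolation
`(1 - t) ‖e^w‖ + t ‖e^z‖`. Comparing with a primitive of this affine bound over `[0, 1]` gives the
average `(‖e^z‖ + ‖e^w‖) / 2`.
-/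

open Set

theorem Complex.convexOn_norm_exp : ConvexOn ℝ univ fun z : ℂ => ‖Complex.exp z‖ := by
  simp only [Complex.norm_exp]
  exact convexOn_exp.comp_linearMap Complex.reLm

theorem norm_sub_le_of_norm_deriv_le_affine {E : Type*} [NormedAddCommGroup E] [NormedSpace ℝ E]
    {f f' : ℝ → E} {p q : ℝ} (hf : ∀ t ∈ Icc (0 : ℝ) 1, HasDerivAt f (f' t) t)
    (bound : ∀ t ∈ Icc (0 : ℝ) 1, ‖f' t‖ ≤ (1 - t) * p + t * q) :
    ‖f 1 - f 0‖ ≤ (p + q) / 2 := by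
  have hB : ∀ t : ℝ, HasDerivAt (fun t => t * p + t ^ 2 / 2 * (q - p)) ((1 - t) * p + t * q) t := by
    intro t
    refine (((hasDerivAt_id' t).mul_const p).add (((hasDerivAt_pow 2 t).div_const 2).mul_const
      (q - p))).congr_deriv ?_
    ring
  have key := image_norm_le_of_norm_deriv_right_le_deriv_boundary (f := fun t => f t - f 0)
    (a := 0) (b := 1)
    (fun t ht => ((hf t ht).sub_const (f 0)).continuousAt.continuousWithinAt)
    (fun t ht => ((hf t (Ico_subset_Icc_self ht)).sub_const (f 0)).hasDerivWithinAt)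
    (by simp) hB (fun t ht => bound t (Ico_subset_Icc_self ht)) (right_mem_Icc.2 zero_le_one)
  calc ‖f 1 - f 0‖ ≤ 1 * p + 1 ^ 2 / 2 * (q - p) := key
    _ = (p + q) / 2 := by ring

theorem abs_exp_sub_exp_le (z w : ℂ) :
    ‖Complex.exp z - Complex.exp w‖ ≤
      (1 / 2) * (‖Complex.exp z‖ + ‖Complex.exp w‖) *
        ‖z - w‖ := by
  have hderiv (t : ℝ) : HasDerivAt (fun t : ℝ => Complex.exp (w + t • (z - w)))
      (Complex.exp (w + t • (z - w)) * (z - w)) t := by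
    simpa using (((hasDerivAt_id t).smul_const (z - w)).const_add w).cexp
  have hbound (t : ℝ) (ht : t ∈ Icc (0 : ℝ) 1) :
      ‖Complex.exp (w + t • (z - w)) * (z - w)‖ ≤
        (1 - t) * (‖Complex.exp w‖ * ‖z - w‖) + t * (‖Complex.exp z‖ * ‖z - w‖) := by
    have hconv := Complex.convexOn_norm_exp.2 (mem_univ w) (mem_univ z) (sub_nonneg.2 ht.2) ht.1
      (sub_add_cancel 1 t)
    have hpath : w + t • (z - w) = (1 - t) • w + t • z := by module
    simp only [smul_eq_mul] at hconv
    calc ‖Complex.exp (w + t • (z - w)) * (z - w)‖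
        = ‖Complex.exp ((1 - t) • w + t • z)‖ * ‖z - w‖ := by rw [norm_mul, hpath]
      _ ≤ ((1 - t) * ‖Complex.exp w‖ + t * ‖Complex.exp z‖) * ‖z - w‖ := by gcongr
      _ = _ := by ring
  have := norm_sub_le_of_norm_deriv_le_affine (fun t _ => hderiv t) hbound
  convert this using 1
  · simp
  · ring
end

section
/- Under the assumptions that Y_{n1},…,Y_{n r_n} are independent nonnegative integer-valued random variables with min_k P(Y_{nk}=0) ≥ 3/4, and with λ_n = ∑_k P(Y_{nk} ≥ 1), Y_n = ∑_k Y_{nk}, one has d_TV(L(Y_n), Po(λ_n)) ≥ (1/10)·(∏_{k} P(Y_{nk}=0))·∑_{k} [P(Y_{nk} ≥ 2) + P(Y_{nk} ≥ 1)²]. -/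
/-!
Only the masses at `0` and `1` are compared. Write `q k = P(Y k ≥ 1)`, `s k = P(Y k ≥ 2)`,
`π = ∏ (1 - q k)`, `πₖ = ∏_{j ≠ k} (1 - q j)` and `λ = ∑ q k`. Independence gives `P(Y = 0) = π`
and `P(Y = 1) ≤ ∑ (q k - s k) πₖ = λ π - ∑ (s k - q k ^ 2) πₖ`, so the second Poisson gap is at
least `λ (e^{-λ} - π) + ∑ (s k - q k ^ 2) πₖ`. Expanding `∏ e^{-q k} - ∏ (1 - q k)` telescopically
and using `1 - q + q²/4 ≤ e^{-q}`, the first gap `e^{-λ} - π` is at least `∑ q k ^ 2 / 4 · πₖ`.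
Taking `9/10` of the first gap plus `1/10` of the second leaves `∑ (s k / 10 + q k ^ 2 / 8) πₖ`,
which dominates `π ∑ (s k + q k ^ 2) / 10` since `π ≤ πₖ`.
-/

open MeasureTheory ProbabilityTheory Finset

lemma Real.one_sub_add_sq_div_four_le_exp_neg {q : ℝ} (hq : q ≤ 2) :
    1 - q + q ^ 2 / 4 ≤ Real.exp (-q) := by
  have h : 1 - q / 2 ≤ Real.exp (-(q / 2)) := by linarith [Real.add_one_le_exp (-(q / 2))]
  calc 1 - q + q ^ 2 / 4 = (1 - q / 2) ^ 2 := by ring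
    _ ≤ Real.exp (-(q / 2)) ^ 2 := pow_le_pow_left₀ (by linarith) h 2
    _ = Real.exp (-q) := by rw [← Real.exp_nat_mul]; ring_nf

lemma Finset.sum_sub_mul_prod_erase_le_prod_sub_prod {ι R : Type*} [CommRing R] [LinearOrder R]
    [IsStrictOrderedRing R] [DecidableEq ι] (s : Finset ι) {f g : ι → R}
    (hg : ∀ i ∈ s, 0 ≤ g i) (hgf : ∀ i ∈ s, g i ≤ f i) :
    ∑ i ∈ s, (f i - g i) * ∏ j ∈ s.erase i, g j ≤ ∏ i ∈ s, f i - ∏ i ∈ s, g i := by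
  induction s using Finset.induction_on with
  | empty => simp
  | insert a s ha ih =>
    simp only [mem_insert, forall_eq_or_imp] at hg hgf
    have herase : ∀ i ∈ s, (insert a s).erase i = insert a (s.erase i) := fun i hi =>
      erase_insert_of_ne fun h => ha (h ▸ hi)
    rw [sum_insert ha, prod_insert ha, prod_insert ha, erase_insert ha,
      sum_congr rfl fun i hi => by rw [herase i hi, prod_insert fun h => ha (mem_of_mem_erase h)],
      ← sum_congr rfl fun i _ => mul_left_comm (g a) _ _, ← mul_sum]
    have hfs : ∏ i ∈ s, g i ≤ ∏ i ∈ s, f i := prod_le_prod hg.2 hgf.2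
    have := mul_le_mul_of_nonneg_left (ih hg.2 hgf.2) hg.1
    nlinarith [prod_nonneg hg.2]

section

variable {ι : Type*} [Fintype ι] [DecidableEq ι] {q : ι → ℝ}

lemma sum_sq_div_four_mul_prod_erase_le_exp_neg_sum_sub_prod (hq : ∀ i, q i ≤ 1) :
    ∑ i, q i ^ 2 / 4 * ∏ j ∈ univ.erase i, (1 - q j) ≤
      Real.exp (-∑ i, q i) - ∏ i, (1 - q i) := by
  have hπ : ∀ i, 0 ≤ ∏ j ∈ univ.erase i, (1 - q j) := fun i =>
    prod_nonneg fun j _ => sub_nonneg.2 (hq j)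
  calc ∑ i, q i ^ 2 / 4 * ∏ j ∈ univ.erase i, (1 - q j)
      ≤ ∑ i, (Real.exp (-q i) - (1 - q i)) * ∏ j ∈ univ.erase i, (1 - q j) :=
        sum_le_sum fun i _ => mul_le_mul_of_nonneg_right (by
          linarith [Real.one_sub_add_sq_div_four_le_exp_neg (q := q i) (by linarith [hq i])]) (hπ i)
    _ ≤ ∏ i, Real.exp (-q i) - ∏ i, (1 - q i) :=
        sum_sub_mul_prod_erase_le_prod_sub_prod _ (fun i _ => sub_nonneg.2 (hq i))
          fun i _ => by linarith [Real.add_one_le_exp (-q i)]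
    _ = Real.exp (-∑ i, q i) - ∏ i, (1 - q i) := by rw [← sum_neg_distrib, Real.exp_sum]

omit [DecidableEq ι] in
lemma prod_one_sub_le_exp_neg_sum (hq : ∀ i, q i ≤ 1) :
    ∏ i, (1 - q i) ≤ Real.exp (-∑ i, q i) := by
  rw [← sum_neg_distrib, Real.exp_sum]
  exact prod_le_prod (fun i _ => sub_nonneg.2 (hq i))
    fun i _ => by linarith [Real.add_one_le_exp (-q i)]

lemma sum_sub_mul_prod_erase_eq (s : ι → ℝ) :
    ∑ i, (q i - s i) * ∏ j ∈ univ.erase i, (1 - q j) =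
      (∑ i, q i) * ∏ i, (1 - q i) - ∑ i, (s i - q i ^ 2) * ∏ j ∈ univ.erase i, (1 - q j) := by
  rw [sum_mul, ← sum_sub_distrib]
  refine sum_congr rfl fun i _ => ?_
  rw [← mul_prod_erase univ (fun j => 1 - q j) (mem_univ i)]
  ring

lemma prod_one_sub_mul_sum_le_poisson_mass_gaps {s : ι → ℝ} (hq0 : ∀ i, 0 ≤ q i)
    (hq1 : ∀ i, q i ≤ 1) (hs : ∀ i, 0 ≤ s i) :
    (1 / 10) * (∏ i, (1 - q i)) * ∑ i, (s i + q i ^ 2) ≤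
      (9 / 10) * (Real.exp (-∑ i, q i) - ∏ i, (1 - q i)) +
        (1 / 10) * ((∑ i, q i) * Real.exp (-∑ i, q i) -
          ∑ i, (q i - s i) * ∏ j ∈ univ.erase i, (1 - q j)) := by
  have hπi : ∀ i, ∏ j, (1 - q j) ≤ ∏ j ∈ univ.erase i, (1 - q j) := fun i => by
    rw [← mul_prod_erase univ (fun j => 1 - q j) (mem_univ i)]
    exact mul_le_of_le_one_left (prod_nonneg fun j _ => sub_nonneg.2 (hq1 j))
      (by linarith [hq0 i])
  have hπE := prod_one_sub_le_exp_neg_sum hq1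
  have hsum : 0 ≤ ∑ i, q i := sum_nonneg fun i _ => hq0 i
  set E := Real.exp (-∑ i, q i)
  set π := ∏ i, (1 - q i)
  have hgap := sum_sq_div_four_mul_prod_erase_le_exp_neg_sum_sub_prod hq1
  rw [sum_sub_mul_prod_erase_eq s]
  calc (1 / 10) * π * ∑ i, (s i + q i ^ 2)
      = ∑ i, (s i + q i ^ 2) / 10 * π := by
        rw [mul_sum]; exact sum_congr rfl fun i _ => by ring
    _ ≤ ∑ i, (s i + q i ^ 2) / 10 * ∏ j ∈ univ.erase i, (1 - q j) := by
        gcongr with i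
        · have := hs i; positivity
        · exact hπi i
    _ ≤ ∑ i, (9 / 10 * (q i ^ 2 / 4) + 1 / 10 * (s i - q i ^ 2)) *
          ∏ j ∈ univ.erase i, (1 - q j) := by
        gcongr with i
        · exact prod_nonneg fun j _ => sub_nonneg.2 (hq1 j)
        · nlinarith [sq_nonneg (q i)]
    _ = 9 / 10 * ∑ i, q i ^ 2 / 4 * ∏ j ∈ univ.erase i, (1 - q j) +
          1 / 10 * ∑ i, (s i - q i ^ 2) * ∏ j ∈ univ.erase i, (1 - q j) := by
        rw [mul_sum, mul_sum, ← sum_add_distrib]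
        exact sum_congr rfl fun i _ => by ring
    _ ≤ _ := by nlinarith [mul_nonneg hsum (sub_nonneg.2 hπE)]

end

lemma Finset.exists_eq_one_and_eq_zero_of_sum_eq_one {ι : Type*} [DecidableEq ι] {s : Finset ι}
    {f : ι → ℕ} (h : ∑ i ∈ s, f i = 1) : ∃ i ∈ s, f i = 1 ∧ ∀ j ∈ s.erase i, f j = 0 := by
  obtain ⟨i, hi, hfi⟩ := exists_ne_zero_of_sum_ne_zero (h ▸ one_ne_zero)
  rw [← add_sum_erase s f hi] at h
  exact ⟨i, hi, by omega, sum_eq_zero_iff.1 (by omega)⟩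

section

variable {Ω ι : Type*} [MeasurableSpace Ω] {P : Measure Ω}

lemma measureReal_eq_eq_sub [IsFiniteMeasure P] {X : Ω → ℕ} (hX : Measurable X) (n : ℕ) :
    P.real {ω | X ω = n} = P.real {ω | n ≤ X ω} - P.real {ω | n + 1 ≤ X ω} := by
  have hsplit : {ω | n ≤ X ω} = {ω | X ω = n} ∪ {ω | n + 1 ≤ X ω} := by
    ext ω; simp only [Set.mem_ofPred_eq, Set.mem_union]; omega
  have hdisj : Disjoint {ω | X ω = n} {ω | n + 1 ≤ X ω} :=
    Set.disjoint_left.2 fun ω h1 h2 => by simp only [Set.mem_ofPred_eq] at h1 h2; omega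
  rw [hsplit, measureReal_union hdisj (hX measurableSet_Ici)]
  ring

variable [Fintype ι] {Y : ι → Ω → ℕ}

lemma ProbabilityTheory.iIndepFun.measureReal_sum_eq_zero (hY : iIndepFun Y P) :
    P.real {ω | ∑ i, Y i ω = 0} = ∏ i, P.real {ω | Y i ω = 0} := by
  have hevent : {ω | ∑ i, Y i ω = 0} = ⋂ i, Y i ⁻¹' {0} := by
    ext ω; simp [sum_eq_zero_iff]
  rw [hevent, measureReal_def, hY.meas_iInter fun i => ⟨{0}, measurableSet_singleton 0, rfl⟩,
    ENNReal.toReal_prod]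
  rfl

lemma ProbabilityTheory.iIndepFun.measureReal_sum_eq_one_le [IsFiniteMeasure P] [DecidableEq ι]
    (hY : iIndepFun Y P) :
    P.real {ω | ∑ i, Y i ω = 1} ≤
      ∑ i, P.real {ω | Y i ω = 1} * ∏ j ∈ univ.erase i, P.real {ω | Y j ω = 0} := by
  let B (i j : ι) : Set ℕ := if j = i then {1} else {0}
  have hsub : {ω | ∑ i, Y i ω = 1} ⊆ ⋃ i, ⋂ j, Y j ⁻¹' B i j := by
    intro ω hω
    obtain ⟨i, -, hi, hzero⟩ := exists_eq_one_and_eq_zero_of_sum_eq_one hω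
    refine Set.mem_iUnion.2 ⟨i, Set.mem_iInter.2 fun j => ?_⟩
    by_cases hj : j = i
    · subst hj; simpa [B] using hi
    · simpa [B, hj] using hzero j (mem_erase.2 ⟨hj, mem_univ j⟩)
  refine (measureReal_mono hsub).trans ((measureReal_iUnion_fintype_le _).trans_eq ?_)
  refine sum_congr rfl fun i _ => ?_
  rw [measureReal_def, hY.meas_iInter fun j => ⟨B i j, trivial, rfl⟩, ENNReal.toReal_prod,
    ← mul_prod_erase univ _ (mem_univ i)]
  congr 1
  · simp only [B, if_pos rfl]; rfl
  · refine prod_congr rfl fun j hj => ?_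
    simp only [B, if_neg (ne_of_mem_erase hj)]; rfl

end

lemma abs_measureReal_setOf_mem_sub_le_iSup {Ω α : Type*} [MeasurableSpace Ω] [MeasurableSpace α]
    (P : Measure Ω) [IsFiniteMeasure P] (ν : Measure α) [IsFiniteMeasure ν] (f : Ω → α)
    (B : Set α) :
    |P.real {ω | f ω ∈ B} - ν.real B| ≤ ⨆ A, |P.real {ω | f ω ∈ A} - ν.real A| := by
  refine le_ciSup (f := fun A => |P.real {ω | f ω ∈ A} - ν.real A|)
    ⟨P.real Set.univ + ν.real Set.univ, ?_⟩ B
  rintro _ ⟨A, rfl⟩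
  calc |P.real {ω | f ω ∈ A} - ν.real A| ≤ |P.real {ω | f ω ∈ A}| + |ν.real A| := abs_sub _ _
    _ ≤ P.real Set.univ + ν.real Set.univ := by
      rw [abs_of_nonneg measureReal_nonneg, abs_of_nonneg measureReal_nonneg]
      exact add_le_add (measureReal_mono (Set.subset_univ _))
        (measureReal_mono (Set.subset_univ _))

theorem poisson_approx_lower_bound_general
    {Ω : Type*} [MeasurableSpace Ω] (P : Measure Ω) [IsProbabilityMeasure P]
    (r : ℕ) (Y : Fin r → Ω → ℕ) (hmeas : ∀ k, Measurable (Y k))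
    (hindep : iIndepFun Y P) :
    (⨆ A : Set ℕ,
        |(P {ω | (∑ k, Y k ω) ∈ A}).toReal -
          (poissonMeasure (∑ k, (P {ω | 1 ≤ Y k ω}).toNNReal) A).toReal|) ≥
      (1 / 10) * (∏ k, (P {ω | Y k ω = 0}).toReal) *
        ∑ k, ((P {ω | 2 ≤ Y k ω}).toReal + (P {ω | 1 ≤ Y k ω}).toReal ^ 2) := by
  simp only [← measureReal_def, ge_iff_le]
  set q : Fin r → ℝ := fun k => P.real {ω | 1 ≤ Y k ω}
  set s : Fin r → ℝ := fun k => P.real {ω | 2 ≤ Y k ω}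
  have hzero (k : Fin r) : P.real {ω | Y k ω = 0} = 1 - q k := by
    simpa using measureReal_eq_eq_sub (P := P) (hmeas k) 0
  have hone (k : Fin r) : P.real {ω | Y k ω = 1} = q k - s k :=
    measureReal_eq_eq_sub (P := P) (hmeas k) 1
  have hrate : ((∑ k, (P {ω | 1 ≤ Y k ω}).toNNReal : NNReal) : ℝ) = ∑ k, q k := by
    push_cast; rfl
  have hdist0 := abs_measureReal_setOf_mem_sub_le_iSup P
    (poissonMeasure (∑ k, (P {ω | 1 ≤ Y k ω}).toNNReal)) (fun ω => ∑ k, Y k ω) {0}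
  have hdist1 := abs_measureReal_setOf_mem_sub_le_iSup P
    (poissonMeasure (∑ k, (P {ω | 1 ≤ Y k ω}).toNNReal)) (fun ω => ∑ k, Y k ω) {1}
  simp only [Set.mem_singleton_iff, poissonMeasure_real_singleton, hrate, pow_zero, pow_one,
    Nat.factorial_zero, Nat.factorial_one, Nat.cast_one, mul_one, div_one,
    hindep.measureReal_sum_eq_zero, hzero] at hdist0 hdist1
  have hsum1 := hindep.measureReal_sum_eq_one_le
  simp only [hone, hzero] at hsum1
  simp only [hzero]
  refine (prod_one_sub_mul_sum_le_poisson_mass_gaps (fun k => measureReal_nonneg)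
    (fun k => measureReal_le_one) fun k => measureReal_nonneg).trans ?_
  linarith [neg_abs_le (∏ k, (1 - q k) - Real.exp (-∑ k, q k)),
    neg_abs_le (P.real {ω | ∑ k, Y k ω = 1} - Real.exp (-∑ k, q k) * ∑ k, q k)]

theorem poisson_approx_lower_bound
    {Ω : Type*} [MeasurableSpace Ω] (P : Measure Ω) [IsProbabilityMeasure P]
    (r : ℕ) (Y : Fin r → Ω → ℕ) (hmeas : ∀ k, Measurable (Y k))
    (hindep : iIndepFun Y P)
    (hmin : ∀ k, (3 : ℝ) / 4 ≤ (P {ω | Y k ω = 0}).toReal) :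
    (⨆ A : Set ℕ,
        |(P {ω | (∑ k, Y k ω) ∈ A}).toReal -
          (poissonMeasure (∑ k, (P {ω | 1 ≤ Y k ω}).toNNReal) A).toReal|) ≥
      (1 / 10) * (∏ k, (P {ω | Y k ω = 0}).toReal) *
        ∑ k, ((P {ω | 2 ≤ Y k ω}).toReal + (P {ω | 1 ≤ Y k ω}).toReal ^ 2) :=
  poisson_approx_lower_bound_general P r Y hmeas hindep
end

section
/- With p_{nk} = P(Y_{nk}=0) for independent nonnegative integer-valued Y_{n1},…,Y_{n r_n}, Y_n = ∑_k Y_{nk} and λ_n = ∑_k (1−p_{nk}), one has |e^{−λ_n} − ∏_{k=1}^{r_n} p_{nk}| = P(Po(λ_n)=0) − P(Y_n=0) ≥ (1/3)·(∏_k p_{nk})·∑_k (1−p_{nk})². -/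
open MeasureTheory ProbabilityTheory Finset

/-! By independence `P(Y_n = 0) = ∏ p_k`, and `e^{-λ_n} = ∏ e^{-(1 - p_k)}`. Termwise
`e^{-(1-p)} ≥ p + (1-p)²/3` (Taylor expansion of `e^{-t}` to order 4 on `[0, 1]`), and for
`0 ≤ y_k ≤ x_k ≤ 1` the product gap `∏ x - ∏ y` is at least `(∏ y) ∑ (x_k - y_k)`; together they
give the lower bound, which in particular makes the difference nonnegative. -/

theorem Real.one_sub_add_sq_div_three_le_exp_neg {t : ℝ} (h0 : 0 ≤ t) (h1 : t ≤ 1) :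
    1 - t + t ^ 2 / 3 ≤ Real.exp (-t) := by
  have hbound :=
    Real.exp_bound (x := -t) (by rwa [abs_neg, abs_of_nonneg h0]) (n := 5) (by norm_num)
  simp only [Finset.sum_range_succ, Finset.sum_range_zero, abs_neg, abs_of_nonneg h0,
    Nat.factorial, Nat.cast_ofNat] at hbound
  norm_num at hbound
  have := (abs_le.1 hbound).1
  nlinarith [pow_nonneg h0 2, pow_nonneg h0 3, mul_nonneg (pow_nonneg h0 2) (sub_nonneg.2 h1),
    mul_nonneg (pow_nonneg h0 3) (sub_nonneg.2 h1), mul_nonneg (pow_nonneg h0 4) (sub_nonneg.2 h1)]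

theorem Finset.prod_mul_sum_sub_le_prod_sub_prod {ι : Type*} (s : Finset ι) {x y : ι → ℝ}
    (hy : ∀ i ∈ s, 0 ≤ y i) (hyx : ∀ i ∈ s, y i ≤ x i) (hx : ∀ i ∈ s, x i ≤ 1) :
    (∏ i ∈ s, y i) * ∑ i ∈ s, (x i - y i) ≤ ∏ i ∈ s, x i - ∏ i ∈ s, y i := by
  classical
  induction s using Finset.induction with
  | empty => simp
  | @insert a s ha ih =>
    simp only [mem_insert, forall_eq_or_imp] at hy hyx hx
    rw [prod_insert ha, prod_insert ha, sum_insert ha]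
    specialize ih hy.2 hyx.2 hx.2
    have hY : 0 ≤ ∏ i ∈ s, y i := prod_nonneg hy.2
    have hS : 0 ≤ ∑ i ∈ s, (x i - y i) := sum_nonneg fun i hi ↦ sub_nonneg.2 (hyx.2 i hi)
    -- ∏ x - ∏ y over `insert a s` is `x a (∏ x - ∏ y) + (x a - y a) ∏ y` over `s`
    have := mul_le_mul_of_nonneg_left ih (hy.1.trans hyx.1)
    nlinarith [mul_nonneg (mul_nonneg hY hS) (sub_nonneg.2 hyx.1),
      mul_nonneg (mul_nonneg hY (sub_nonneg.2 (hyx.1.trans hx.1))) (sub_nonneg.2 hyx.1)]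

theorem Real.prod_mul_sum_sq_div_three_le_exp_sub_prod {ι : Type*} (s : Finset ι) {p : ι → ℝ}
    (hp0 : ∀ i ∈ s, 0 ≤ p i) (hp1 : ∀ i ∈ s, p i ≤ 1) :
    (1 / 3) * (∏ i ∈ s, p i) * ∑ i ∈ s, (1 - p i) ^ 2 ≤
      Real.exp (-∑ i ∈ s, (1 - p i)) - ∏ i ∈ s, p i := by
  have hexp : ∀ i ∈ s, p i + (1 - p i) ^ 2 / 3 ≤ Real.exp (-(1 - p i)) := fun i hi ↦ by
    linarith [Real.one_sub_add_sq_div_three_le_exp_neg (sub_nonneg.2 (hp1 i hi))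
      (by linarith [hp0 i hi])]
  have hsq : ∀ i ∈ s, 0 ≤ (1 - p i) ^ 2 / 3 := fun i _ ↦ by positivity
  calc (1 / 3) * (∏ i ∈ s, p i) * ∑ i ∈ s, (1 - p i) ^ 2
      = (∏ i ∈ s, p i) * ∑ i ∈ s, (1 - p i) ^ 2 / 3 := by rw [← sum_div]; ring
    _ ≤ (∏ i ∈ s, p i) * ∑ i ∈ s, (Real.exp (-(1 - p i)) - p i) := by
        gcongr with i hi
        · exact prod_nonneg hp0
        · linarith [hexp i hi]
    _ ≤ ∏ i ∈ s, Real.exp (-(1 - p i)) - ∏ i ∈ s, p i :=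
        prod_mul_sum_sub_le_prod_sub_prod s hp0
          (fun i hi ↦ by linarith [hexp i hi, hsq i hi])
          (fun i hi ↦ Real.exp_le_one_iff.2 (by linarith [hp1 i hi]))
    _ = Real.exp (-∑ i ∈ s, (1 - p i)) - ∏ i ∈ s, p i := by
        rw [← Real.exp_sum, sum_neg_distrib]

theorem ProbabilityTheory.iIndepFun.measure_sum_eq_zero {Ω ι : Type*} [MeasurableSpace Ω]
    {P : Measure Ω} [Fintype ι] {Y : ι → Ω → ℕ} (hY : iIndepFun Y P) :
    P {ω | ∑ i, Y i ω = 0} = ∏ i, P {ω | Y i ω = 0} := by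
  have hset : {ω | ∑ i, Y i ω = 0} = ⋂ i, Y i ⁻¹' {0} := by
    ext ω
    simp [sum_eq_zero_iff]
  rw [hset, hY.meas_iInter fun i ↦ ⟨{0}, measurableSet_singleton 0, rfl⟩]
  rfl

theorem poisson_zero_prob_diff_general
    {Ω : Type*} [MeasurableSpace Ω] (P : Measure Ω) [IsProbabilityMeasure P]
    (r : ℕ) (Y : Fin r → Ω → ℕ)
    (hindep : iIndepFun Y P) :
    |Real.exp (-(∑ k, (1 - (P {ω | Y k ω = 0}).toReal))) -
        ∏ k, (P {ω | Y k ω = 0}).toReal| =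
      Real.exp (-(∑ k, (1 - (P {ω | Y k ω = 0}).toReal))) -
        (P {ω | (∑ k, Y k ω) = 0}).toReal ∧
    Real.exp (-(∑ k, (1 - (P {ω | Y k ω = 0}).toReal))) -
        (P {ω | (∑ k, Y k ω) = 0}).toReal ≥
      (1 / 3) * (∏ k, (P {ω | Y k ω = 0}).toReal) *
        ∑ k, (1 - (P {ω | Y k ω = 0}).toReal) ^ 2 := by
  rw [hindep.measure_sum_eq_zero, ENNReal.toReal_prod]
  have key := Real.prod_mul_sum_sq_div_three_le_exp_sub_prod univ
    (p := fun k ↦ (P {ω | Y k ω = 0}).toReal) (fun _ _ ↦ ENNReal.toReal_nonneg)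
    (fun _ _ ↦ measureReal_le_one)
  exact ⟨abs_of_nonneg (le_trans (by positivity) key), key⟩

theorem poisson_zero_prob_diff
    {Ω : Type*} [MeasurableSpace Ω] (P : Measure Ω) [IsProbabilityMeasure P]
    (r : ℕ) (Y : Fin r → Ω → ℕ) (hmeas : ∀ k, Measurable (Y k))
    (hindep : iIndepFun Y P) :
    |Real.exp (-(∑ k, (1 - (P {ω | Y k ω = 0}).toReal))) -
        ∏ k, (P {ω | Y k ω = 0}).toReal| =
      Real.exp (-(∑ k, (1 - (P {ω | Y k ω = 0}).toReal))) -
        (P {ω | (∑ k, Y k ω) = 0}).toReal ∧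
    Real.exp (-(∑ k, (1 - (P {ω | Y k ω = 0}).toReal))) -
        (P {ω | (∑ k, Y k ω) = 0}).toReal ≥
      (1 / 3) * (∏ k, (P {ω | Y k ω = 0}).toReal) *
        ∑ k, (1 - (P {ω | Y k ω = 0}).toReal) ^ 2 :=
  poisson_zero_prob_diff_general P r Y hindep
end

section
/- Let n ≥ 2, 0 ≤ m ≤ n−1, λ_{n,j} := ∑_{i=m+1}^{n} (1 − i/n)^j for j ≥ 1, and λ_n := λ_{n,1}. Then for every j ≥ 2, λ_{n,j} ≤ λ_n · (2λ_n/n)^{(j−1)/2}. -/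
open Finset

/-! The terms `1 - i/n`, `m < i ≤ n`, lie in `[0, c]` with `c = (n - m - 1)/n` (the term at
`i = m + 1`), so `λ_{n,j} ≤ c^(j-1) λ_n`. Gauss' sum gives `λ_n = (n - m)(n - m - 1)/(2n)`,
whence `c² ≤ 2λ_n/n` and `c^(j-1) ≤ (2λ_n/n)^((j-1)/2)`. -/

theorem Finset.sum_pow_succ_le_pow_mul_sum {ι R : Type*} [CommSemiring R] [PartialOrder R]
    [IsOrderedRing R] (s : Finset ι) {f : ι → R} {c : R} (hf : ∀ i ∈ s, 0 ≤ f i ∧ f i ≤ c)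
    (k : ℕ) : ∑ i ∈ s, f i ^ (k + 1) ≤ c ^ k * ∑ i ∈ s, f i := by
  rw [mul_sum]
  refine sum_le_sum fun i hi => ?_
  obtain ⟨h0, hc⟩ := hf i hi
  rw [pow_succ]
  exact mul_le_mul_of_nonneg_right (pow_le_pow_left₀ h0 hc k) h0

theorem pow_le_rpow_half_of_sq_le {c x : ℝ} (hc : 0 ≤ c) (h : c ^ 2 ≤ x) (k : ℕ) :
    c ^ k ≤ x ^ ((k : ℝ) / 2) := by
  calc c ^ k = (c ^ 2) ^ ((k : ℝ) / 2) := by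
        rw [← Real.rpow_natCast c 2, ← Real.rpow_mul hc, ← Real.rpow_natCast]
        congr 1
        push_cast
        ring
    _ ≤ x ^ ((k : ℝ) / 2) := by gcongr

theorem sum_Icc_natCast_sub {m n : ℕ} (hmn : m < n) :
    ∑ i ∈ Icc (m + 1) n, ((n : ℝ) - i) = (n - m) * (n - m - 1) / 2 := by
  have hreflect : ∑ i ∈ Icc (m + 1) n, (n - i) = ∑ k ∈ range (n - m), k :=
    sum_nbij' (fun i => n - i) (fun k => n - k) (by simp; omega) (by simp; omega)
      (by simp; omega) (by simp; omega) (fun _ _ => rfl)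
  have hgauss := congrArg (Nat.cast : ℕ → ℝ) (sum_range_id_mul_two (n - m))
  rw [← hreflect, Nat.sub_sub] at hgauss
  push_cast [Nat.cast_sub hmn, Nat.cast_sub hmn.le,
    sum_congr rfl fun i hi => Nat.cast_sub (mem_Icc.1 hi).2] at hgauss
  rw [eq_div_iff two_ne_zero, hgauss]
  ring

theorem sum_Icc_one_sub_div {m n : ℕ} (hmn : m < n) :
    ∑ i ∈ Icc (m + 1) n, (1 - (i : ℝ) / n) = (n - m) * (n - m - 1) / (2 * n) := by
  have hn : (n : ℝ) ≠ 0 := Nat.cast_ne_zero.2 (by omega)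
  rw [div_mul_eq_div_div, ← sum_Icc_natCast_sub hmn, sum_div]
  exact sum_congr rfl fun i _ => by field_simp

theorem lambda_nj_bound (n m : ℕ) (hn : 2 ≤ n) (hm : m ≤ n - 1) (j : ℕ) (hj : 2 ≤ j) :
    (∑ i ∈ Finset.Icc (m + 1) n, (1 - (i : ℝ) / n) ^ j) ≤
      (∑ i ∈ Finset.Icc (m + 1) n, (1 - (i : ℝ) / n)) *
        (2 * (∑ i ∈ Finset.Icc (m + 1) n, (1 - (i : ℝ) / n)) / n) ^ (((j : ℝ) - 1) / 2) := by
  have hmn : m < n := by omega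
  have hn0 : (0 : ℝ) < n := by positivity
  have hmn' : (m : ℝ) + 1 ≤ n := by exact_mod_cast hmn
  obtain ⟨k, rfl⟩ : ∃ k, j = k + 1 := ⟨j - 1, by omega⟩
  set c : ℝ := ((n : ℝ) - m - 1) / n
  have hterm : ∀ i ∈ Icc (m + 1) n, 0 ≤ 1 - (i : ℝ) / n ∧ 1 - (i : ℝ) / n ≤ c := by
    intro i hi
    have ⟨hmi, hin⟩ : (m : ℝ) + 1 ≤ i ∧ (i : ℝ) ≤ n := by exact_mod_cast mem_Icc.1 hi
    rw [one_sub_div hn0.ne']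
    exact ⟨div_nonneg (by linarith) hn0.le, div_le_div_of_nonneg_right (by linarith) hn0.le⟩
  have hc0 : 0 ≤ c := div_nonneg (by linarith) hn0.le
  have hc : c ^ 2 ≤ 2 * (∑ i ∈ Icc (m + 1) n, (1 - (i : ℝ) / n)) / n := by
    rw [sum_Icc_one_sub_div hmn, div_pow, le_div_iff₀ hn0]
    field_simp
    nlinarith
  calc ∑ i ∈ Icc (m + 1) n, (1 - (i : ℝ) / n) ^ (k + 1)
      ≤ c ^ k * ∑ i ∈ Icc (m + 1) n, (1 - (i : ℝ) / n) := sum_pow_succ_le_pow_mul_sum _ hterm k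
    _ ≤ _ := by
      rw [mul_comm, show ((k + 1 : ℕ) : ℝ) - 1 = k by push_cast; ring]
      exact mul_le_mul_of_nonneg_left (pow_le_rpow_half_of_sq_le hc0 hc k)
        (sum_nonneg fun i hi => (hterm i hi).1)
end

section
/- Let n ≥ 2 and 1 ≤ m ≤ n−1 with n − m ≥ 2, and let σ_n² = n·∑_{k=m+1}^{n} (n−k)/k². If m ≤ n/2 − 1 then (1/20)·n²/m ≤ σ_n² ≤ n²/m; if m ≥ n/2 then (1/24)·(n−m)²/n ≤ σ_n² ≤ 2·(n−m)²/n. -/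
/-! With `S = ∑_{k=m+1}^n (n-k)/k²`, so that `σ_n² = n S`, everything rests on comparing `1/k²`
with the telescoping terms `1/(k(k+1))` and `1/((k-1)k)`: the sum of `1/k²` over `(a, b]` lies
between `1/(a+1) - 1/(b+1)` and `1/a - 1/b`.

For `m ≤ n/2 - 1`, the upper bound follows from `(n-k)/k² ≤ n/k²`. For the lower bound keep only
the terms with `k ≤ j`, where `n - k ≥ n - j`, taking `j = 2m` if `4m ≤ n` and `j = ⌊7n/10⌋`
otherwise. For `m ≥ n/2` every `k` lies in `[n/2, n]`, so `1/k²` is within a factor `4` of `1/n²`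
and `S` is comparable to `∑ (n-k)/n² = (n-m)(n-m-1)/(2n²)`. -/

open Finset

section

variable {α : Type*} [Field α] [LinearOrder α] [IsStrictOrderedRing α]

theorem inv_add_one_sub_inv_add_one_le_sum_Ioc_inv_sq {k n : ℕ} (h : k ≤ n) :
    ((k : α) + 1)⁻¹ - ((n : α) + 1)⁻¹ ≤ ∑ i ∈ Ioc k n, ((i : α) ^ 2)⁻¹ := by
  induction n, h using Nat.le_induction with
  | base => simp
  | succ n hn ih =>
    rw [sum_Ioc_succ_top hn]
    have hstep : ((n : α) + 1)⁻¹ - ((n : α) + 1 + 1)⁻¹ ≤ (((n : α) + 1) ^ 2)⁻¹ := by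
      have : (0 : α) < (n : α) + 1 := by positivity
      field_simp
      linarith
    push_cast
    linarith

theorem sum_Ioc_natCast_sub (m n : ℕ) (h : m ≤ n) :
    ∑ k ∈ Ioc m n, ((n : α) - k) = ((n : α) - m) * ((n : α) - m - 1) / 2 := by
  induction n, h using Nat.le_induction with
  | base => simp
  | succ n hn ih =>
    rw [sum_Ioc_succ_top hn]
    push_cast
    simp only [add_sub_right_comm _ (1 : α), sum_add_distrib, ih, sum_const, Nat.card_Ioc,
      nsmul_eq_mul, Nat.cast_sub hn]
    ring

end

noncomputable def sigmaSq (n m : ℕ) : ℝ :=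
  n * ∑ k ∈ Icc (m + 1) n, ((n : ℝ) - k) / (k : ℝ) ^ 2

namespace sigmaSq

variable {n m : ℕ}

theorem eq_sum_Ioc (n m : ℕ) : sigmaSq n m = n * ∑ k ∈ Ioc m n, ((n : ℝ) - k) / (k : ℝ) ^ 2 := by
  rw [sigmaSq, Icc_add_one_left_eq_Ioc]

theorem le_sq_div_sub (hm : 1 ≤ m) (hmn : m ≤ n) : sigmaSq n m ≤ (n : ℝ) ^ 2 / m - n := by
  have hterm : ∀ k ∈ Ioc m n, ((n : ℝ) - k) / (k : ℝ) ^ 2 ≤ n * ((k : ℝ) ^ 2)⁻¹ := fun k _ => by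
    rw [div_eq_mul_inv]
    gcongr
    linarith [k.cast_nonneg (α := ℝ)]
  have hn0 : (0 : ℝ) < n := by exact_mod_cast hm.trans hmn
  calc sigmaSq n m ≤ n * (n * ((m : ℝ)⁻¹ - (n : ℝ)⁻¹)) := by
        rw [eq_sum_Ioc]
        gcongr
        calc _ ≤ ∑ k ∈ Ioc m n, n * ((k : ℝ) ^ 2)⁻¹ := sum_le_sum hterm
          _ ≤ _ := by
            rw [← mul_sum]
            gcongr
            exact sum_Ioc_inv_sq_le_sub (by omega) hmn
    _ = (n : ℝ) ^ 2 / m - n := by field_simp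

theorem mul_sub_mul_inv_sub_inv_le {j : ℕ} (hmj : m ≤ j) (hjn : j ≤ n) :
    n * ((n : ℝ) - j) * (((m : ℝ) + 1)⁻¹ - ((j : ℝ) + 1)⁻¹) ≤ sigmaSq n m := by
  have hj : (j : ℝ) ≤ n := by exact_mod_cast hjn
  rw [eq_sum_Ioc, mul_assoc]
  gcongr
  calc ((n : ℝ) - j) * (((m : ℝ) + 1)⁻¹ - ((j : ℝ) + 1)⁻¹)
      ≤ ((n : ℝ) - j) * ∑ k ∈ Ioc m j, ((k : ℝ) ^ 2)⁻¹ :=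
        mul_le_mul_of_nonneg_left (inv_add_one_sub_inv_add_one_le_sum_Ioc_inv_sq hmj)
          (by linarith)
    _ = ∑ k ∈ Ioc m j, ((n : ℝ) - j) / (k : ℝ) ^ 2 := by simp only [mul_sum, div_eq_mul_inv]
    _ ≤ ∑ k ∈ Ioc m j, ((n : ℝ) - k) / (k : ℝ) ^ 2 := by
        gcongr with k hk
        exact_mod_cast (mem_Ioc.1 hk).2
    _ ≤ ∑ k ∈ Ioc m n, ((n : ℝ) - k) / (k : ℝ) ^ 2 := by
        refine sum_le_sum_of_subset_of_nonneg (Ioc_subset_Ioc_right hjn) fun k hk _ => ?_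
        have : (k : ℝ) ≤ n := by exact_mod_cast (mem_Ioc.1 hk).2
        exact div_nonneg (by linarith) (by positivity)

theorem sq_div_twelve_mul_le (hm : 1 ≤ m) (h : 4 * m ≤ n) :
    (n : ℝ) ^ 2 / (12 * m) ≤ sigmaSq n m := by
  have hmR : (1 : ℝ) ≤ m := by exact_mod_cast hm
  have hnR : 4 * (m : ℝ) ≤ n := by exact_mod_cast h
  have hinv : (6 * (m : ℝ))⁻¹ ≤ ((m : ℝ) + 1)⁻¹ - (2 * (m : ℝ) + 1)⁻¹ := by
    rw [inv_sub_inv (by positivity) (by positivity), ← one_div,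
      div_le_div_iff₀ (by positivity) (by positivity)]
    nlinarith
  calc (n : ℝ) ^ 2 / (12 * m) = n * ((n : ℝ) / 2) * (6 * (m : ℝ))⁻¹ := by field_simp; ring
    _ ≤ n * ((n : ℝ) - (2 * m : ℕ)) * (((m : ℝ) + 1)⁻¹ - (((2 * m : ℕ) : ℝ) + 1)⁻¹) := by
        push_cast
        have : (n : ℝ) / 2 ≤ n - 2 * m := by linarith
        gcongr
        exact mul_nonneg (by positivity) (by linarith)
    _ ≤ sigmaSq n m := mul_sub_mul_inv_sub_inv_le (by omega) (by omega)

theorem two_mul_sq_div_le (hm : 2 ≤ m) (h : 2 * m + 2 ≤ n) :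
    2 * (n : ℝ) ^ 2 / (35 * m) ≤ sigmaSq n m := by
  set j := 7 * n / 10 with hj
  have hjR : 10 * (j : ℝ) ≤ 7 * n ∧ 7 * (n : ℝ) < 10 * (j + 1) := by
    constructor <;> norm_cast <;> omega
  have hmR : (2 : ℝ) ≤ m := by exact_mod_cast hm
  have hR : 2 * (m : ℝ) + 2 ≤ n := by exact_mod_cast h
  have hinv : (21 * (m : ℝ) / 4)⁻¹ ≤ ((m : ℝ) + 1)⁻¹ - ((j : ℝ) + 1)⁻¹ := by
    rw [inv_sub_inv (by positivity) (by positivity), ← one_div,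
      div_le_div_iff₀ (by positivity) (by positivity)]
    nlinarith
  calc 2 * (n : ℝ) ^ 2 / (35 * m) = n * (3 * (n : ℝ) / 10) * (21 * (m : ℝ) / 4)⁻¹ := by
        field_simp; ring
    _ ≤ n * ((n : ℝ) - j) * (((m : ℝ) + 1)⁻¹ - ((j : ℝ) + 1)⁻¹) := by
        have : 3 * (n : ℝ) / 10 ≤ n - j := by linarith
        gcongr
        exact mul_nonneg (by positivity) (by linarith)
    _ ≤ sigmaSq n m := mul_sub_mul_inv_sub_inv_le (by omega) (by omega)

theorem sq_div_twenty_mul_le (hm : 1 ≤ m) (h : 2 * m + 2 ≤ n) :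
    (n : ℝ) ^ 2 / (20 * m) ≤ sigmaSq n m := by
  by_cases hsmall : 4 * m ≤ n
  · calc (n : ℝ) ^ 2 / (20 * m) ≤ (n : ℝ) ^ 2 / (12 * m) := by gcongr; norm_num
      _ ≤ sigmaSq n m := sq_div_twelve_mul_le hm hsmall
  · calc (n : ℝ) ^ 2 / (20 * m) ≤ 2 * (n : ℝ) ^ 2 / (35 * m) := by
          rw [div_le_div_iff₀ (by positivity) (by positivity)]
          nlinarith [sq_nonneg (n : ℝ)]
      _ ≤ sigmaSq n m := two_mul_sq_div_le (by omega) h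

theorem sub_mul_sub_one_div_le (hmn : m < n) :
    ((n : ℝ) - m) * ((n : ℝ) - m - 1) / (2 * n) ≤ sigmaSq n m := by
  have hn0 : (0 : ℝ) < n := by exact_mod_cast m.zero_le.trans_lt hmn
  have hterm : ∀ k ∈ Ioc m n, ((n : ℝ) - k) * ((n : ℝ) ^ 2)⁻¹ ≤ ((n : ℝ) - k) / (k : ℝ) ^ 2 := by
    intro k hk
    obtain ⟨hmk, hkn⟩ := mem_Ioc.1 hk
    have hkn : (k : ℝ) ≤ n := by exact_mod_cast hkn
    have hk0 : (0 : ℝ) < k := by exact_mod_cast m.zero_le.trans_lt hmk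
    rw [div_eq_mul_inv]
    gcongr
  calc ((n : ℝ) - m) * ((n : ℝ) - m - 1) / (2 * n)
      = n * (∑ k ∈ Ioc m n, ((n : ℝ) - k) * ((n : ℝ) ^ 2)⁻¹) := by
        rw [← sum_mul, sum_Ioc_natCast_sub m n hmn.le]
        field_simp
    _ ≤ sigmaSq n m := by
        rw [eq_sum_Ioc]
        gcongr with k hk
        exact hterm k hk

theorem le_two_mul_sub_mul_sub_one_div (h : n ≤ 2 * m) (hmn : m < n) :
    sigmaSq n m ≤ 2 * ((n : ℝ) - m) * ((n : ℝ) - m - 1) / n := by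
  have hn0 : (0 : ℝ) < n := by exact_mod_cast m.zero_le.trans_lt hmn
  have hterm : ∀ k ∈ Ioc m n, ((n : ℝ) - k) / (k : ℝ) ^ 2 ≤ ((n : ℝ) - k) * (4 / (n : ℝ) ^ 2) := by
    intro k hk
    obtain ⟨hmk, hkn⟩ := mem_Ioc.1 hk
    have hkn : (k : ℝ) ≤ n := by exact_mod_cast hkn
    have hnk : (n : ℝ) ≤ 2 * k := by exact_mod_cast h.trans (by omega)
    rw [div_eq_mul_inv]
    gcongr
    calc ((k : ℝ) ^ 2)⁻¹ ≤ (((n : ℝ) / 2) ^ 2)⁻¹ := by gcongr; linarith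
      _ = 4 / (n : ℝ) ^ 2 := by ring
  calc sigmaSq n m ≤ n * (∑ k ∈ Ioc m n, ((n : ℝ) - k) * (4 / (n : ℝ) ^ 2)) := by
        rw [eq_sum_Ioc]
        gcongr with k hk
        exact hterm k hk
    _ = 2 * ((n : ℝ) - m) * ((n : ℝ) - m - 1) / n := by
        rw [← sum_mul, sum_Ioc_natCast_sub m n hmn.le]
        field_simp
        ring

end sigmaSq

theorem sigma_sq_bounds_general (n m : ℕ) (hm1 : 1 ≤ m)
    (hnm : 2 ≤ n - m) :
    (((m : ℝ) ≤ (n : ℝ) / 2 - 1 →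
        (1 / 20) * (n : ℝ) ^ 2 / m ≤
            (n : ℝ) * ∑ k ∈ Finset.Icc (m + 1) n, ((n : ℝ) - k) / (k : ℝ) ^ 2 ∧
          (n : ℝ) * ∑ k ∈ Finset.Icc (m + 1) n, ((n : ℝ) - k) / (k : ℝ) ^ 2 ≤
            (n : ℝ) ^ 2 / m)) ∧
    (((n : ℝ) / 2 ≤ (m : ℝ) →
        (1 / 24) * ((n : ℝ) - m) ^ 2 / n ≤
            (n : ℝ) * ∑ k ∈ Finset.Icc (m + 1) n, ((n : ℝ) - k) / (k : ℝ) ^ 2 ∧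
          (n : ℝ) * ∑ k ∈ Finset.Icc (m + 1) n, ((n : ℝ) - k) / (k : ℝ) ^ 2 ≤
            2 * ((n : ℝ) - m) ^ 2 / n)) := by
  have hmn : m + 2 ≤ n := by omega
  have hgap : (2 : ℝ) ≤ n - m := by
    rw [← Nat.cast_sub (by omega)]
    exact_mod_cast hnm
  have hn0 : (0 : ℝ) < n := by linarith [m.cast_nonneg (α := ℝ)]
  refine ⟨fun hsmall => ⟨?_, ?_⟩, fun hlarge => ⟨?_, ?_⟩⟩
  · have h : 2 * m + 2 ≤ n := by
      have : ((2 * m + 2 : ℕ) : ℝ) ≤ n := by push_cast; linarith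
      exact_mod_cast this
    calc (1 / 20) * (n : ℝ) ^ 2 / m = (n : ℝ) ^ 2 / (20 * m) := by ring
      _ ≤ sigmaSq n m := sigmaSq.sq_div_twenty_mul_le hm1 h
  · calc sigmaSq n m ≤ (n : ℝ) ^ 2 / m - n := sigmaSq.le_sq_div_sub hm1 (by omega)
      _ ≤ (n : ℝ) ^ 2 / m := by linarith
  · have : ((n : ℝ) - m) ^ 2 / 12 ≤ ((n : ℝ) - m) * ((n : ℝ) - m - 1) := by nlinarith
    calc (1 / 24) * ((n : ℝ) - m) ^ 2 / n = ((n : ℝ) - m) ^ 2 / 12 / (2 * n) := by ring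
      _ ≤ ((n : ℝ) - m) * ((n : ℝ) - m - 1) / (2 * n) := by gcongr
      _ ≤ sigmaSq n m := sigmaSq.sub_mul_sub_one_div_le (by omega)
  · have h : n ≤ 2 * m := by
      have : (n : ℝ) ≤ ((2 * m : ℕ) : ℝ) := by push_cast; linarith
      exact_mod_cast this
    calc sigmaSq n m ≤ 2 * ((n : ℝ) - m) * ((n : ℝ) - m - 1) / n :=
          sigmaSq.le_two_mul_sub_mul_sub_one_div h (by omega)
      _ ≤ 2 * ((n : ℝ) - m) ^ 2 / n := div_le_div_of_nonneg_right (by nlinarith) hn0.le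

theorem sigma_sq_bounds (n m : ℕ) (hn : 2 ≤ n) (hm1 : 1 ≤ m) (hm2 : m ≤ n - 1)
    (hnm : 2 ≤ n - m) :
    (((m : ℝ) ≤ (n : ℝ) / 2 - 1 →
        (1 / 20) * (n : ℝ) ^ 2 / m ≤
            (n : ℝ) * ∑ k ∈ Finset.Icc (m + 1) n, ((n : ℝ) - k) / (k : ℝ) ^ 2 ∧
          (n : ℝ) * ∑ k ∈ Finset.Icc (m + 1) n, ((n : ℝ) - k) / (k : ℝ) ^ 2 ≤
            (n : ℝ) ^ 2 / m)) ∧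
    (((n : ℝ) / 2 ≤ (m : ℝ) →
        (1 / 24) * ((n : ℝ) - m) ^ 2 / n ≤
            (n : ℝ) * ∑ k ∈ Finset.Icc (m + 1) n, ((n : ℝ) - k) / (k : ℝ) ^ 2 ∧
          (n : ℝ) * ∑ k ∈ Finset.Icc (m + 1) n, ((n : ℝ) - k) / (k : ℝ) ^ 2 ≤
            2 * ((n : ℝ) - m) ^ 2 / n)) :=
  sigma_sq_bounds_general n m hm1 hnm
end
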